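/- Let 𝔄 be a unital C*-algebra, 𝔅 ⊆ 𝔄 a unital C*-subalgebra containing the unit of 𝔄, and Φ : 𝔄 → 𝔅 a positive conditional expectation. Let U, V ∈ 𝔄 be such that U − 1 and V are monotonically independent over 𝔅 (the closed subalgebra generated by {U − 1} ∪ 𝔅 carrying index 1 and that generated by {V} ∪ 𝔅 carrying index 2). For W ∈ 𝔄 and z ∈ 𝔅 small define ϱ_W(z) = Φ(Wz(1 − Wz)⁻¹) and ρ_W(z) = ϱ_W(z)(1 + ϱ_W(z))⁻¹. Then there exists ε > 0 such that for all z ∈ 𝔅 with ‖z‖ < ε all the relevant inverses exist and ρ_{UV}(z) = ρ_U(ρ_V(z)). -/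

import Mathlib

open scoped BigOperators

/-- An index tuple `j : Fin (ℓ+1) → I` is V-shaped if it is strictly decreasing up to some
position `t` and strictly increasing from `t` on; this encodes the index patterns
`i_m > ⋯ > i_1 < k_1 < ⋯ < k_n` appearing in condition (b) of monotonic independence. -/
def VShaped {I : Type*} [LinearOrder I] {ℓ : ℕ} (j : Fin (ℓ + 1) → I) : Prop :=
  ∃ t : Fin (ℓ + 1),
    (∀ r s : Fin (ℓ + 1), r < s → s ≤ t → j s < j r) ∧
    (∀ r s : Fin (ℓ + 1), t ≤ r → r < s → j r < j s)

/-- A family of subsets `S i` of `A`, indexed by a totally ordered set `I`, is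
monotonically independent with respect to `Φ : A → A`
(`Φ` being a `𝔅`-valued conditional expectation, viewed inside `A`) if:
(a) `Φ (A X_i X_j X_k B) = Φ (A X_i Φ(X_j) X_k B)` whenever `i < j > k` (with the
outer factors `A`, `B` possibly omitted), and
(b) `Φ` factorizes on products whose index tuple decreases strictly and then increases
strictly (`i_m > ⋯ > i_1 < k_1 < ⋯ < k_n`). -/
def MonoIndep {A : Type*} [Monoid A] {I : Type*} [LinearOrder I]
    (Φ : A → A) (S : I → Set A) : Prop :=
  (∀ i j k : I, i < j → k < j → ∀ x ∈ S i, ∀ y ∈ S j, ∀ z ∈ S k,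
      (∀ a b : A, Φ (a * x * y * z * b) = Φ (a * x * Φ y * z * b)) ∧
      (∀ b : A, Φ (x * y * z * b) = Φ (x * Φ y * z * b)) ∧
      (∀ a : A, Φ (a * x * y * z) = Φ (a * x * Φ y * z)) ∧
      Φ (x * y * z) = Φ (x * Φ y * z)) ∧
  (∀ (ℓ : ℕ) (j : Fin (ℓ + 1) → I), VShaped j →
      ∀ x : Fin (ℓ + 1) → A, (∀ r, x r ∈ S (j r)) →
      Φ (List.ofFn x).prod = (List.ofFn fun r => Φ (x r)).prod)

/-- `ϱ_W(z) = Φ(Wz (1 - Wz)⁻¹)`. -/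
noncomputable def varrhoTrans {A : Type*} [Ring A] [Algebra ℂ A]
    (Φ : A →ₗ[ℂ] A) (W z : A) : A :=
  Φ (W * z * Ring.inverse (1 - W * z))

/-- `ρ_W(z) = ϱ_W(z) (1 + ϱ_W(z))⁻¹`. -/
noncomputable def rhoTrans {A : Type*} [Ring A] [Algebra ℂ A]
    (Φ : A →ₗ[ℂ] A) (W z : A) : A :=
  varrhoTrans Φ W z * Ring.inverse (1 + varrhoTrans Φ W z)

/-!
Put `X = U - 1`, `a = V z`, `Q = (1 - a)⁻¹`, `R = (1 - U V z)⁻¹` and `c = ϱ_V(z) = Φ(a Q)`, so that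
`Φ(Q) = 1 + c`. Since `ρ_W = 1 - (1 + ϱ_W)⁻¹`, `1 + ϱ_W(z) = Φ((1 - W z)⁻¹)`, and
`1 - U ρ_V(z) = (1 - X c)(1 + c)⁻¹` with `1 + c ∈ 𝔅`, everything reduces to `Φ(R) = Φ(Q) Φ(T)`
for `T = (1 - X c)⁻¹`.

With `Yₘ = X (c X)ᵐ`, the difference `Φ(Q Yₘ a R) - Φ(Q) Φ(Yₘ c T)` does not depend on `m`:
expanding `R = Q + Q X a R` once, condition (b) (indices `1 > 0 < 1`) factors
`Φ(Q Yₘ a Q) = Φ(Q) Φ(Yₘ) c`, and condition (a) (indices `0 < 1 > 0`) replaces the inner `a Q`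
by `c`, which turns `Yₘ` into `Yₘ₊₁`; expanding `T = 1 + X c T` does the same on the other side.
For `m = 0` the difference is `Φ(R) - Φ(Q) Φ(T)`, and it tends to `0` because `‖c X‖ < 1`.
-/

open Filter Topology

section MonoIndep

variable {A I : Type*} [Monoid A] [LinearOrder I] {Φ : A → A} {S : I → Set A}

theorem vShaped_of_lt {i j : I} (h : i < j) : VShaped ![j, i, j] := by
  refine ⟨1, fun r s hrs hs => ?_, fun r s hr hrs => ?_⟩ <;>
    fin_cases r <;> fin_cases s <;> simp_all [Fin.lt_def, Fin.le_def]

theorem MonoIndep.map_mul_mul_of_lt (hind : MonoIndep Φ S) {i j : I} (hij : i < j)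
    {x y w : A} (hx : x ∈ S j) (hy : y ∈ S i) (hw : w ∈ S j) :
    Φ (x * y * w) = Φ x * Φ y * Φ w := by
  have h := hind.2 2 ![j, i, j] (vShaped_of_lt hij) ![x, y, w] fun r => by
    fin_cases r <;> assumption
  simpa [List.ofFn_succ, mul_assoc] using h

end MonoIndep

section Ring

variable {R : Type*} [Ring R]

theorem Ring.inverse_one_sub_eq_one_add {y : R} (h : IsUnit (1 - y)) :
    Ring.inverse (1 - y) = 1 + y * Ring.inverse (1 - y) := by
  have := Ring.mul_inverse_cancel _ h
  rw [sub_mul, one_mul, sub_eq_iff_eq_add] at this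
  exact this

theorem mul_inverse_one_add_eq {x : R} (h : IsUnit (1 + x)) :
    x * Ring.inverse (1 + x) = 1 - Ring.inverse (1 + x) := by
  rw [eq_sub_iff_add_eq, ← add_one_mul, add_comm, Ring.mul_inverse_cancel _ h]

theorem one_sub_mul_mul_inverse_one_add (U : R) {c : R} (hc : IsUnit (1 + c)) :
    1 - U * (c * Ring.inverse (1 + c)) = (1 - (U - 1) * c) * Ring.inverse (1 + c) := by
  rw [sub_mul, one_mul, mul_assoc, mul_inverse_one_add_eq hc]
  noncomm_ring

theorem Ring.inverse_one_sub_mul_eq {U a : R} (ha : IsUnit (1 - a)) (hUa : IsUnit (1 - U * a)) :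
    Ring.inverse (1 - U * a) =
      Ring.inverse (1 - a) + Ring.inverse (1 - a) * (U - 1) * (a * Ring.inverse (1 - U * a)) := by
  calc Ring.inverse (1 - U * a)
      = Ring.inverse (1 - a) * ((1 - U * a + (U - 1) * a) * Ring.inverse (1 - U * a)) := by
        rw [show 1 - U * a + (U - 1) * a = 1 - a by noncomm_ring,
          Ring.inverse_mul_cancel_left _ _ ha]
    _ = _ := by rw [add_mul, Ring.mul_inverse_cancel _ hUa]; noncomm_ring

variable [Algebra ℂ R] {Φ : R →ₗ[ℂ] R}

theorem one_add_varrhoTrans (hone : Φ 1 = 1) {W z : R} (h : IsUnit (1 - W * z)) :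
    1 + varrhoTrans Φ W z = Φ (Ring.inverse (1 - W * z)) := by
  conv_rhs => rw [Ring.inverse_one_sub_eq_one_add h]
  rw [map_add, hone, varrhoTrans]

theorem rhoTrans_eq_one_sub_inverse {W z : R} (h : IsUnit (1 + varrhoTrans Φ W z)) :
    rhoTrans Φ W z = 1 - Ring.inverse (1 + varrhoTrans Φ W z) :=
  mul_inverse_one_add_eq h

theorem one_add_varrhoTrans_mul_inverse_one_add (hone : Φ 1 = 1) {U c : R}
    (hc : IsUnit (1 + c)) (hUc : IsUnit (1 - (U - 1) * c))
    (hΦc : ∀ y, Φ ((1 + c) * y) = (1 + c) * Φ y) :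
    IsUnit (1 - U * (c * Ring.inverse (1 + c))) ∧
      1 + varrhoTrans Φ U (c * Ring.inverse (1 + c)) =
        (1 + c) * Φ (Ring.inverse (1 - (U - 1) * c)) := by
  have hUw := one_sub_mul_mul_inverse_one_add U hc
  have hunit : IsUnit (1 - U * (c * Ring.inverse (1 + c))) := hUw ▸ hUc.mul hc.ringInverse
  refine ⟨hunit, ?_⟩
  rw [one_add_varrhoTrans hone hunit, hUw, Ring.inverse_mul (.inl hUc), Ring.inverse_inverse hc,
    hΦc]

end Ring

theorem LinearMap.continuous_of_map_star_mul_self_nonneg {A₁ A₂ : Type*}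
    [CStarAlgebra A₁] [PartialOrder A₁] [StarOrderedRing A₁]
    [CStarAlgebra A₂] [PartialOrder A₂] [StarOrderedRing A₂] (Φ : A₁ →ₗ[ℂ] A₂)
    (hpos : ∀ a, 0 ≤ Φ (star a * a)) : Continuous Φ :=
  map_continuous <| PositiveLinearMap.mk₀ Φ fun _ hx => by
    obtain ⟨b, rfl⟩ := CStarAlgebra.nonneg_iff_eq_star_mul_self.1 hx
    exact hpos b

section Normed

variable {A : Type*} [NormedRing A]

theorem Filter.Tendsto.eventually_norm_lt_one {α : Type*} {l : Filter α} {f : α → A}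
    (hf : Tendsto f l (𝓝 0)) : ∀ᶠ x in l, ‖f x‖ < 1 :=
  (tendsto_zero_iff_norm_tendsto_zero.1 hf).eventually_lt_const one_pos

section Algebra

variable [NormedAlgebra ℂ A] {Φ : A →ₗ[ℂ] A}

theorem map_inverse_one_sub_mul_of_monoIndep (hΦ : Continuous Φ) (hone : Φ 1 = 1)
    {S₀ S₁ : Subalgebra ℂ A}
    (hind : MonoIndep Φ (fun t : Fin 2 => if t = 0 then (S₀ : Set A) else S₁))
    {U a c : A} (hU : U - 1 ∈ S₀) (hc : c ∈ S₀) (ha : a ∈ S₁) (hQ : Ring.inverse (1 - a) ∈ S₁)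
    (hca : Φ (a * Ring.inverse (1 - a)) = c) (hΦc : ∀ y, Φ (y * c) = Φ y * c)
    (ha1 : IsUnit (1 - a)) (hUa : IsUnit (1 - U * a)) (hUc : IsUnit (1 - (U - 1) * c))
    (hcU : ‖c * (U - 1)‖ < 1) :
    Φ (Ring.inverse (1 - U * a)) =
      Φ (Ring.inverse (1 - a)) * Φ (Ring.inverse (1 - (U - 1) * c)) := by
  set X := U - 1
  set Q := Ring.inverse (1 - a)
  set R := Ring.inverse (1 - U * a)
  set T := Ring.inverse (1 - X * c)
  set Y : ℕ → A := fun m => X * (c * X) ^ m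
  have hY : ∀ m, Y m ∈ S₀ := fun m => S₀.mul_mem hU (S₀.pow_mem (S₀.mul_mem hc hU) m)
  have hYc : ∀ m, Y m * c * X = Y (m + 1) := fun m => by simp only [Y, pow_succ, mul_assoc]
  have haQ : a * Q ∈ S₁ := S₁.mul_mem ha hQ
  have hR : R = Q + Q * X * (a * R) := Ring.inverse_one_sub_mul_eq ha1 hUa
  have hT : T = 1 + X * c * T := Ring.inverse_one_sub_eq_one_add hUc
  have hfactor : ∀ m, Φ (Q * Y m * (a * Q)) = Φ Q * Φ (Y m) * c := fun m => by
    rw [← hca]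
    exact hind.map_mul_mul_of_lt (i := 0) (j := 1) (by decide) (by simpa) (by simpa using hY m)
      (by simpa)
  have hcollapse : ∀ m, Φ (Q * Y m * (a * Q) * X * (a * R)) = Φ (Q * Y (m + 1) * (a * R)) :=
    fun m => by
      rw [(hind.1 0 1 0 (by decide) (by decide) _ (by simpa using hY m) _ (by simpa using haQ) _
        (by simpa using hU)).1, hca, ← hYc]
      simp only [mul_assoc]
  set f : ℕ → A := fun m => Φ (Q * Y m * (a * R)) - Φ Q * Φ (Y m * c * T)
  have hf0 : Φ R - Φ Q * Φ T = f 0 := by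
    simp only [f, Y, pow_zero, mul_one]
    conv_lhs => rw [hR, hT]
    rw [map_add, map_add, hone]
    noncomm_ring
  have hfsucc : ∀ m, f (m + 1) = f m := fun m => by
    have e₁ : Φ (Q * Y m * (a * R)) = Φ Q * Φ (Y m) * c + Φ (Q * Y (m + 1) * (a * R)) := by
      rw [← hfactor, ← hcollapse, ← map_add]
      conv_lhs => rw [hR]
      noncomm_ring
    have e₂ : Φ (Y m * c * T) = Φ (Y m) * c + Φ (Y (m + 1) * c * T) := by
      rw [← hΦc, ← hYc, ← map_add]
      conv_lhs => rw [hT]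
      noncomm_ring
    simp only [f, e₁, e₂]
    noncomm_ring
  have hlim : Tendsto f atTop (𝓝 0) := by
    have hY0 : Tendsto Y atTop (𝓝 0) := by
      simpa using (tendsto_pow_atTop_nhds_zero_of_norm_lt_one hcU).const_mul X
    have hg : Continuous fun y => Φ (Q * y * (a * R)) - Φ Q * Φ (y * c * T) := by fun_prop
    simpa [f, Function.comp_def] using (hg.tendsto 0).comp hY0
  have hconst : ∀ m, f m = f 0 := fun m => Nat.rec rfl (fun m ih => (hfsucc m).trans ih) m
  rw [← sub_eq_zero, hf0]
  exact tendsto_nhds_unique (tendsto_const_nhds.congr fun m => (hconst m).symm) hlim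

end Algebra

theorem Algebra.subset_topologicalClosure_adjoin (R : Type*) [CommSemiring R] [Algebra R A]
    (s : Set A) : s ⊆ (Algebra.adjoin R s).topologicalClosure :=
  Algebra.subset_adjoin.trans (Subalgebra.le_topologicalClosure _)

variable [CompleteSpace A]

theorem isUnit_one_add_of_norm_lt_one {x : A} (h : ‖x‖ < 1) : IsUnit (1 + x) := by
  simpa using isUnit_one_sub_of_norm_lt_one (x := -x) (by simpa)

theorem inverse_one_sub_mem_of_isClosed {S : Type*} [SetLike S A] [SubsemiringClass S A] {s : S}
    (hs : IsClosed (s : Set A)) {x : A} (hx : x ∈ s) (h : ‖x‖ < 1) :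
    Ring.inverse (1 - x) ∈ s :=
  hs.mem_of_tendsto (hasSum_geom_series_inverse x h).tendsto_sum_nat <|
    .of_forall fun _ => sum_mem fun i _ => pow_mem hx i

variable [NormedAlgebra ℂ A] {Φ : A →ₗ[ℂ] A}

theorem tendsto_varrhoTrans (hΦ : Continuous Φ) (W : A) :
    Tendsto (varrhoTrans Φ W) (𝓝 0) (𝓝 0) := by
  have hinv : ContinuousAt (fun z : A => Ring.inverse (1 - W * z)) 0 :=
    ContinuousAt.comp (g := Ring.inverse) (by simpa using NormedRing.inverse_continuousAt 1)
      (by fun_prop)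
  have : ContinuousAt (varrhoTrans Φ W) 0 :=
    hΦ.continuousAt.comp (f := fun z => W * z * Ring.inverse (1 - W * z)) (by fun_prop)
  simpa [varrhoTrans] using this.tendsto

theorem rhoTrans_comp_of_norm_lt_one (hΦ : Continuous Φ) (hone : Φ 1 = 1)
    {B S₀ S₁ : Subalgebra ℂ A} (hmem : ∀ x, Φ x ∈ B)
    (hbimod : ∀ b₁ ∈ B, ∀ b₂ ∈ B, ∀ x, Φ (b₁ * x * b₂) = b₁ * Φ x * b₂)
    (hB₀ : B ≤ S₀) (hB₁ : B ≤ S₁) (hS₁ : IsClosed (S₁ : Set A))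
    (hind : MonoIndep Φ (fun t : Fin 2 => if t = 0 then (S₀ : Set A) else S₁))
    {U V z : A} (hU : U - 1 ∈ S₀) (hV : V ∈ S₁) (hz : z ∈ B)
    (hUVz : ‖U * V * z‖ < 1) (hϱUV : ‖varrhoTrans Φ (U * V) z‖ < 1) (hVz : ‖V * z‖ < 1)
    (hϱV : ‖varrhoTrans Φ V z‖ < 1) (hUc : ‖(U - 1) * varrhoTrans Φ V z‖ < 1)
    (hcU : ‖varrhoTrans Φ V z * (U - 1)‖ < 1) :
    IsUnit (1 - (U * V) * z) ∧ IsUnit (1 + varrhoTrans Φ (U * V) z) ∧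
      IsUnit (1 - V * z) ∧ IsUnit (1 + varrhoTrans Φ V z) ∧
      IsUnit (1 - U * rhoTrans Φ V z) ∧
      IsUnit (1 + varrhoTrans Φ U (rhoTrans Φ V z)) ∧
      rhoTrans Φ (U * V) z = rhoTrans Φ U (rhoTrans Φ V z) := by
  set c := varrhoTrans Φ V z
  have hcB : c ∈ B := hmem _
  have hVzS₁ : V * z ∈ S₁ := S₁.mul_mem hV (hB₁ hz)
  have hcore := map_inverse_one_sub_mul_of_monoIndep hΦ hone hind hU (hB₀ hcB) hVzS₁
    (inverse_one_sub_mem_of_isClosed hS₁ hVzS₁ hVz) rfl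
    (fun y => by simpa using hbimod 1 B.one_mem c hcB y) (isUnit_one_sub_of_norm_lt_one hVz)
    (by rw [← mul_assoc]; exact isUnit_one_sub_of_norm_lt_one hUVz)
    (isUnit_one_sub_of_norm_lt_one hUc) hcU
  obtain ⟨hUw, hϱU⟩ := one_add_varrhoTrans_mul_inverse_one_add hone
    (isUnit_one_add_of_norm_lt_one hϱV) (isUnit_one_sub_of_norm_lt_one hUc)
    (fun y => by simpa using hbimod _ (B.add_mem B.one_mem hcB) 1 B.one_mem y)
  have hϱ : 1 + varrhoTrans Φ U (rhoTrans Φ V z) = 1 + varrhoTrans Φ (U * V) z := by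
    rw [one_add_varrhoTrans hone (isUnit_one_sub_of_norm_lt_one hUVz), mul_assoc, hcore,
      ← one_add_varrhoTrans hone (isUnit_one_sub_of_norm_lt_one hVz)]
    exact hϱU
  have hϱUV' := isUnit_one_add_of_norm_lt_one hϱUV
  refine ⟨isUnit_one_sub_of_norm_lt_one hUVz, hϱUV', isUnit_one_sub_of_norm_lt_one hVz,
    isUnit_one_add_of_norm_lt_one hϱV, hUw, hϱ ▸ hϱUV', ?_⟩
  rw [rhoTrans_eq_one_sub_inverse hϱUV', rhoTrans_eq_one_sub_inverse (hϱ ▸ hϱUV'), hϱ]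

end Normed

theorem rhoTrans_comp_general {A : Type*} [CStarAlgebra A] [PartialOrder A] [StarOrderedRing A]
    (B : StarSubalgebra ℂ A)
    (Φ : A →ₗ[ℂ] A)
    (hmem : ∀ x : A, Φ x ∈ B)
    (hfix : ∀ b ∈ B, Φ b = b)
    (hbimod : ∀ b₁ ∈ B, ∀ b₂ ∈ B, ∀ x : A, Φ (b₁ * x * b₂) = b₁ * Φ x * b₂)
    (hpos : ∀ a : A, 0 ≤ Φ (star a * a))
    (U V : A)
    (hindep : MonoIndep (fun x => Φ x)
      (fun t : Fin 2 =>
        if t = 0 then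
          ((Algebra.adjoin ℂ ({U - 1} ∪ (B : Set A))).topologicalClosure : Set A)
        else
          ((Algebra.adjoin ℂ ({V} ∪ (B : Set A))).topologicalClosure : Set A))) :
    ∃ ε > (0 : ℝ), ∀ z ∈ B, ‖z‖ < ε →
      IsUnit (1 - (U * V) * z) ∧ IsUnit (1 + varrhoTrans Φ (U * V) z) ∧
      IsUnit (1 - V * z) ∧ IsUnit (1 + varrhoTrans Φ V z) ∧
      IsUnit (1 - U * rhoTrans Φ V z) ∧
      IsUnit (1 + varrhoTrans Φ U (rhoTrans Φ V z)) ∧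
      rhoTrans Φ (U * V) z = rhoTrans Φ U (rhoTrans Φ V z) := by
  have hΦ := Φ.continuous_of_map_star_mul_self_nonneg hpos
  have hc := tendsto_varrhoTrans hΦ V
  have hsmall : ∀ᶠ z in 𝓝 (0 : A), ‖U * V * z‖ < 1 ∧ ‖varrhoTrans Φ (U * V) z‖ < 1 ∧
      ‖V * z‖ < 1 ∧ ‖varrhoTrans Φ V z‖ < 1 ∧ ‖(U - 1) * varrhoTrans Φ V z‖ < 1 ∧
      ‖varrhoTrans Φ V z * (U - 1)‖ < 1 := by
    refine .and ?_ (.and ?_ (.and ?_ (.and ?_ (.and ?_ ?_)))) <;>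
      refine Tendsto.eventually_norm_lt_one ?_
    · simpa using (continuous_const_mul (U * V)).tendsto 0
    · exact tendsto_varrhoTrans hΦ (U * V)
    · simpa using (continuous_const_mul V).tendsto 0
    · exact hc
    · simpa using hc.const_mul (U - 1)
    · simpa using hc.mul_const (U - 1)
  obtain ⟨ε, hε, hsmall⟩ := Metric.eventually_nhds_iff.1 hsmall
  refine ⟨ε, hε, fun z hz hzε => ?_⟩
  obtain ⟨hUVz, hϱUV, hVz, hϱV, hUc, hcU⟩ := hsmall (by simpa using hzε)
  exact rhoTrans_comp_of_norm_lt_one hΦ (hfix 1 B.one_mem) hmem hbimod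
    (fun b hb => Algebra.subset_topologicalClosure_adjoin ℂ _ (.inr hb))
    (fun b hb => Algebra.subset_topologicalClosure_adjoin ℂ _ (.inr hb))
    (Subalgebra.isClosed_topologicalClosure _) hindep
    (Algebra.subset_topologicalClosure_adjoin ℂ _ (.inl rfl))
    (Algebra.subset_topologicalClosure_adjoin ℂ _ (.inl rfl)) hz hUVz hϱUV hVz hϱV hUc hcU

/-- second identity of Theorem 3.4: if `U - 1` and `V` are monotonically
independent over `𝔅`, then `ρ_{UV}(z) = ρ_U(ρ_V(z))` for `z` near `0 ∈ 𝔅`. -/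
theorem rhoTrans_comp {A : Type*} [CStarAlgebra A] [PartialOrder A] [StarOrderedRing A]
    (B : StarSubalgebra ℂ A) (hBclosed : IsClosed (B : Set A))
    (Φ : A →ₗ[ℂ] A)
    (hmem : ∀ x : A, Φ x ∈ B)
    (hfix : ∀ b ∈ B, Φ b = b)
    (hbimod : ∀ b₁ ∈ B, ∀ b₂ ∈ B, ∀ x : A, Φ (b₁ * x * b₂) = b₁ * Φ x * b₂)
    (hpos : ∀ a : A, 0 ≤ Φ (star a * a))
    (U V : A)
    (hindep : MonoIndep (fun x => Φ x)
      (fun t : Fin 2 =>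
        if t = 0 then
          ((Algebra.adjoin ℂ ({U - 1} ∪ (B : Set A))).topologicalClosure : Set A)
        else
          ((Algebra.adjoin ℂ ({V} ∪ (B : Set A))).topologicalClosure : Set A))) :
    ∃ ε > (0 : ℝ), ∀ z ∈ B, ‖z‖ < ε →
      IsUnit (1 - (U * V) * z) ∧ IsUnit (1 + varrhoTrans Φ (U * V) z) ∧
      IsUnit (1 - V * z) ∧ IsUnit (1 + varrhoTrans Φ V z) ∧
      IsUnit (1 - U * rhoTrans Φ V z) ∧
      IsUnit (1 + varrhoTrans Φ U (rhoTrans Φ V z)) ∧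
      rhoTrans Φ (U * V) z = rhoTrans Φ U (rhoTrans Φ V z) :=
  rhoTrans_comp_general B Φ hmem hfix hbimod hpos U V hindep
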